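/- Let k1, k2 ≥ 1 and let C1, C2 : Matrix (Fin k1) (Fin k2) ℝ. The bi-matrix game (C1, C2) is potential if and only if B_{k1} * (C2 − C1) * (B_{k2})ᵀ = 0. -/
import Mathlib


open Matrix

/-- The matrix `B_k = [I_{k-1}, -1_{k-1}]` of size `(k-1) × k`. -/
def Bmat (k : ℕ) : Matrix (Fin (k - 1)) (Fin k) ℝ :=
  Matrix.of fun i j => if (j : ℕ) = (i : ℕ) then 1 else if (j : ℕ) = k - 1 then -1 else 0

/-- A bi-matrix game `(C1, C2)` is potential if it admits a potential matrix `P`. -/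
def IsPotentialBimatrix {k1 k2 : ℕ} (C1 C2 : Matrix (Fin k1) (Fin k2) ℝ) : Prop :=
  ∃ P : Matrix (Fin k1) (Fin k2) ℝ,
    (∀ i i' : Fin k1, ∀ j : Fin k2, C1 i j - C1 i' j = P i j - P i' j) ∧
    (∀ i : Fin k1, ∀ j j' : Fin k2, C2 i j - C2 i j' = P i j - P i j')

lemma sumB {k : ℕ} (hk : 1 ≤ k) (i : Fin (k - 1)) (g : Fin k → ℝ) :
    ∑ a, Bmat k i a * g a
      = g ⟨i, by have := i.isLt; omega⟩ - g ⟨k - 1, by omega⟩ := by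
  have hi : (i : ℕ) < k - 1 := i.isLt
  have h : ∀ a : Fin k, Bmat k i a * g a
      = (if a = (⟨i, by omega⟩ : Fin k) then g a else 0)
        + (if a = (⟨k - 1, by omega⟩ : Fin k) then -g a else 0) := by
    intro a
    unfold Bmat
    simp only [Matrix.of_apply, Fin.ext_iff, Fin.val_mk]
    split_ifs <;> first | ring1 | (exfalso; omega)
  rw [Finset.sum_congr rfl (fun a _ => h a), Finset.sum_add_distrib,
    Finset.sum_ite_eq', Finset.sum_ite_eq']
  simp
  ring

lemma entry_eq (k1 k2 : ℕ) (hk1 : 1 ≤ k1) (hk2 : 1 ≤ k2)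
    (D : Matrix (Fin k1) (Fin k2) ℝ) (i : Fin (k1 - 1)) (j : Fin (k2 - 1)) :
    (Bmat k1 * D * (Bmat k2)ᵀ) i j
      = D ⟨i, by have := i.isLt; omega⟩ ⟨j, by have := j.isLt; omega⟩
        - D ⟨k1 - 1, by omega⟩ ⟨j, by have := j.isLt; omega⟩
        - D ⟨i, by have := i.isLt; omega⟩ ⟨k2 - 1, by omega⟩
        + D ⟨k1 - 1, by omega⟩ ⟨k2 - 1, by omega⟩ := by
  have h1 : ∀ b : Fin k2, (Bmat k1 * D) i b
      = D ⟨i, by have := i.isLt; omega⟩ b - D ⟨k1 - 1, by omega⟩ b := by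
    intro b
    rw [Matrix.mul_apply]
    exact sumB hk1 i (fun a => D a b)
  rw [Matrix.mul_apply]
  have : ∀ b : Fin k2, (Bmat k1 * D) i b * (Bmat k2)ᵀ b j
      = Bmat k2 j b * (Bmat k1 * D) i b := by
    intro b; rw [Matrix.transpose_apply]; ring
  rw [Finset.sum_congr rfl (fun b _ => this b), sumB hk2 j]
  rw [h1, h1]
  ring

theorem stmt0 (k1 k2 : ℕ) (hk1 : 1 ≤ k1) (hk2 : 1 ≤ k2)
    (C1 C2 : Matrix (Fin k1) (Fin k2) ℝ) :
    IsPotentialBimatrix C1 C2 ↔ Bmat k1 * (C2 - C1) * (Bmat k2)ᵀ = 0 := by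
  set L1 : Fin k1 := ⟨k1 - 1, by omega⟩ with hL1
  set L2 : Fin k2 := ⟨k2 - 1, by omega⟩ with hL2
  constructor
  · rintro ⟨P, h1, h2⟩
    ext i j
    rw [entry_eq k1 k2 hk1 hk2 _ i j]
    simp only [Matrix.sub_apply, Matrix.zero_apply]
    set a : Fin k1 := ⟨i, by have := i.isLt; omega⟩
    set b : Fin k2 := ⟨j, by have := j.isLt; omega⟩
    linear_combination h2 a b L2 - h2 L1 b L2 - h1 a L1 b + h1 a L1 L2
  · intro hM
    -- four-point condition for D = C2 - C1
    have key : ∀ (a : Fin k1) (b : Fin k2),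
        (C2 - C1) a b - (C2 - C1) L1 b - (C2 - C1) a L2 + (C2 - C1) L1 L2 = 0 := by
      intro a b
      by_cases ha : (a : ℕ) = k1 - 1
      · have : a = L1 := Fin.ext ha
        rw [this]; ring
      · by_cases hb : (b : ℕ) = k2 - 1
        · have : b = L2 := Fin.ext hb
          rw [this]; ring
        · have ha' : (a : ℕ) < k1 - 1 := by have := a.isLt; omega
          have hb' : (b : ℕ) < k2 - 1 := by have := b.isLt; omega
          have := congrFun (congrFun hM ⟨a, ha'⟩) ⟨b, hb'⟩
          rw [entry_eq k1 k2 hk1 hk2 _ ⟨a, ha'⟩ ⟨b, hb'⟩] at this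
          simpa using this
    refine ⟨fun a b => C1 a b + C2 L1 b - C1 L1 b, fun i i' j => by ring, fun i j j' => ?_⟩
    have h1 := key i j
    have h2 := key i j'
    simp only [Matrix.sub_apply] at h1 h2
    linear_combination h1 - h2
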